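/- arXiv:math/0412556 — 4 statements merged into one kernel-verified Lean document; each statement's English description precedes it below -/
import Mathlib

section
/- Let L be a lattice. A function f : L → ℝ≥0 is a join valuation (for all x, y, z ∈ L, f(x ⊔ z) + f(y) ≤ f(x ⊔ y) + f(y ⊔ z)) if and only if f is increasing (a ≤ b implies f(a) ≤ f(b)) and satisfies join-modularity: for all x, z ∈ L, f(x ⊔ z) + f(x ⊓ z) ≤ f(x) + f(z). -/
/-- A function on a lattice is a join valuation iff it is increasing and
join-modular. -/
theorem joinValuation_iff_monotone_and_joinModular {L : Type*} [Lattice L]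
    (f : L → NNReal) :
    (∀ x y z : L, f (x ⊔ z) + f y ≤ f (x ⊔ y) + f (y ⊔ z)) ↔
      (Monotone f ∧ ∀ x z : L, f (x ⊔ z) + f (x ⊓ z) ≤ f x + f z) := by
  constructor
  · intro H
    constructor
    · intro a b hab
      have h := H a b a
      simp only [sup_idem, sup_eq_right.mpr hab, sup_eq_left.mpr hab] at h
      exact le_of_add_le_add_right h
    · intro x z
      have h := H x (x ⊓ z) z
      rwa [sup_inf_self, sup_eq_right.mpr (inf_le_right (a := x))] at h
  · rintro ⟨hm, hmod⟩ x y z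
    calc f (x ⊔ z) + f y
        ≤ f ((x ⊔ y) ⊔ (y ⊔ z)) + f ((x ⊔ y) ⊓ (y ⊔ z)) := by
          gcongr
          · exact hm (sup_le (le_sup_of_le_left le_sup_left) (le_sup_of_le_right le_sup_right))
          · exact hm (le_inf le_sup_right le_sup_left)
      _ ≤ f (x ⊔ y) + f (y ⊔ z) := hmod _ _
end

section
/- Let L be a lattice. A function f : L → ℝ≥0 is a meet valuation (for all x, y, z ∈ L, f(x ⊓ z) + f(y) ≥ f(x ⊓ y) + f(y ⊓ z)) if and only if f is increasing (a ≤ b implies f(a) ≤ f(b)) and satisfies meet-modularity: for all x, z ∈ L, f(x ⊔ z) + f(x ⊓ z) ≥ f(x) + f(z). -/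
/-- A function on a lattice is a meet valuation iff it is increasing and
meet-modular. -/
theorem meetValuation_iff_monotone_and_meetModular {L : Type*} [Lattice L]
    (f : L → NNReal) :
    (∀ x y z : L, f (x ⊓ y) + f (y ⊓ z) ≤ f (x ⊓ z) + f y) ↔
      (Monotone f ∧ ∀ x z : L, f x + f z ≤ f (x ⊔ z) + f (x ⊓ z)) := by
  constructor
  · intro h
    constructor
    · intro a b hab
      have := h a b a
      rw [inf_eq_left.mpr hab, inf_eq_right.mpr hab, inf_idem] at this
      have := add_le_add_iff_left (f a) |>.mp this
      exact this
    · intro x z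
      have := h x (x ⊔ z) z
      rw [inf_eq_left.mpr le_sup_left, inf_eq_right.mpr le_sup_right] at this
      exact this.trans_eq (add_comm _ _)
  · rintro ⟨hmono, hmod⟩ x y z
    calc f (x ⊓ y) + f (y ⊓ z) ≤ f ((x ⊓ y) ⊔ (y ⊓ z)) + f ((x ⊓ y) ⊓ (y ⊓ z)) :=
          hmod _ _
      _ ≤ f y + f (x ⊓ z) := by
          gcongr
          · exact hmono (sup_le inf_le_right inf_le_left)
          · exact hmono (le_inf (inf_le_left.trans inf_le_left) (inf_le_right.trans inf_le_right))
      _ = f (x ⊓ z) + f y := add_comm _ _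
end

section
/- Let L be a lattice and f : L → ℝ≥0. Then f is a valuation (i.e., f is increasing and modular: f(x ⊔ z) + f(x ⊓ z) = f(x) + f(z) for all x, z ∈ L) if and only if f is both a join valuation (for all x, y, z, f(x ⊔ z) + f(y) ≤ f(x ⊔ y) + f(y ⊔ z)) and a meet valuation (for all x, y, z, f(x ⊓ z) + f(y) ≥ f(x ⊓ y) + f(y ⊓ z)). -/
/-- A function on a lattice is a valuation (increasing and modular) iff it is
both a join valuation and a meet valuation. -/
theorem valuation_iff_joinValuation_and_meetValuation {L : Type*} [Lattice L]
    (f : L → NNReal) :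
    (Monotone f ∧ ∀ x z : L, f (x ⊔ z) + f (x ⊓ z) = f x + f z) ↔
      ((∀ x y z : L, f (x ⊔ z) + f y ≤ f (x ⊔ y) + f (y ⊔ z)) ∧
        (∀ x y z : L, f (x ⊓ y) + f (y ⊓ z) ≤ f (x ⊓ z) + f y)) := by
  constructor
  · rintro ⟨hm, hmod⟩
    constructor
    · intro x y z
      have h := hmod (x ⊔ y) (y ⊔ z)
      have h1 : f (x ⊔ z) ≤ f ((x ⊔ y) ⊔ (y ⊔ z)) := hm (by
        simp only [sup_le_iff]
        exact ⟨le_sup_left.trans le_sup_left, le_sup_right.trans le_sup_right⟩)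
      have h2 : f y ≤ f ((x ⊔ y) ⊓ (y ⊔ z)) := hm (le_inf le_sup_right le_sup_left)
      calc f (x ⊔ z) + f y ≤ f ((x ⊔ y) ⊔ (y ⊔ z)) + f ((x ⊔ y) ⊓ (y ⊔ z)) :=
            add_le_add h1 h2
        _ = f (x ⊔ y) + f (y ⊔ z) := h
    · intro x y z
      have h := hmod (x ⊓ y) (y ⊓ z)
      have h1 : f ((x ⊓ y) ⊔ (y ⊓ z)) ≤ f y := hm (sup_le inf_le_right inf_le_left)
      have h2 : f ((x ⊓ y) ⊓ (y ⊓ z)) ≤ f (x ⊓ z) := hm (le_inf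
        (inf_le_left.trans inf_le_left) (inf_le_right.trans inf_le_right))
      calc f (x ⊓ y) + f (y ⊓ z) = f ((x ⊓ y) ⊔ (y ⊓ z)) + f ((x ⊓ y) ⊓ (y ⊓ z)) := h.symm
        _ ≤ f y + f (x ⊓ z) := add_le_add h1 h2
        _ = f (x ⊓ z) + f y := by ring
  · rintro ⟨hj, hmt⟩
    constructor
    · intro a b hab
      have h := hmt a b a
      rw [inf_eq_left.mpr hab, inf_comm, inf_eq_left.mpr hab, inf_idem] at h
      exact le_of_add_le_add_left h
    · intro x z
      apply le_antisymm
      · have h := hj x (x ⊓ z) z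
        rwa [sup_inf_self, sup_eq_right.mpr (inf_le_right : x ⊓ z ≤ z)] at h
      · have h := hmt x (x ⊔ z) z
        rwa [inf_sup_self, inf_eq_right.mpr (le_sup_right : z ≤ x ⊔ z), add_comm (f (x ⊓ z))] at h
end

section
/- Let L be a lattice and f : L → ℝ≥0. Then f is a co-valuation (i.e., f is decreasing: a ≤ b implies f(b) ≤ f(a), and modular: f(x ⊔ z) + f(x ⊓ z) = f(x) + f(z) for all x, z ∈ L) if and only if f is both a join co-valuation (for all x, y, z, f(x ⊔ z) + f(y) ≥ f(x ⊔ y) + f(y ⊔ z)) and a meet co-valuation (for all x, y, z, f(x ⊓ z) + f(y) ≤ f(x ⊓ y) + f(y ⊓ z)). -/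
/-- A function on a lattice is a co-valuation (decreasing and modular) iff it is
both a join co-valuation and a meet co-valuation. -/
theorem coValuation_iff_joinCoValuation_and_meetCoValuation {L : Type*} [Lattice L]
    (f : L → NNReal) :
    (Antitone f ∧ ∀ x z : L, f (x ⊔ z) + f (x ⊓ z) = f x + f z) ↔
      ((∀ x y z : L, f (x ⊔ y) + f (y ⊔ z) ≤ f (x ⊔ z) + f y) ∧
        (∀ x y z : L, f (x ⊓ z) + f y ≤ f (x ⊓ y) + f (y ⊓ z))) := by
  constructor
  · rintro ⟨hA, hM⟩
    constructor
    · intro x y z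
      have h := hM (x ⊔ y) (y ⊔ z)
      have h1 : f (x ⊔ y ⊔ (y ⊔ z)) ≤ f (x ⊔ z) := hA (by
        apply sup_le (le_sup_of_le_left le_sup_left) (le_sup_of_le_right le_sup_right))
      have h2 : f ((x ⊔ y) ⊓ (y ⊔ z)) ≤ f y := hA (le_inf le_sup_right le_sup_left)
      calc f (x ⊔ y) + f (y ⊔ z) = f (x ⊔ y ⊔ (y ⊔ z)) + f ((x ⊔ y) ⊓ (y ⊔ z)) := h.symm
        _ ≤ f (x ⊔ z) + f y := add_le_add h1 h2
    · intro x y z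
      have h := hM (x ⊓ y) (y ⊓ z)
      have h1 : f (x ⊓ z) ≤ f (x ⊓ y ⊓ (y ⊓ z)) := hA (by
        apply le_inf (inf_le_of_left_le inf_le_left) (inf_le_of_right_le inf_le_right))
      have h2 : f y ≤ f ((x ⊓ y) ⊔ (y ⊓ z)) := hA (sup_le inf_le_right inf_le_left)
      calc f (x ⊓ z) + f y ≤ f (x ⊓ y ⊓ (y ⊓ z)) + f ((x ⊓ y) ⊔ (y ⊓ z)) :=
            add_le_add h1 h2
        _ = f (x ⊓ y) + f (y ⊓ z) := by rw [add_comm]; exact h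
  · rintro ⟨hJ, hMt⟩
    constructor
    · intro a b hab
      have h := hJ a b a
      rw [sup_eq_right.2 hab, sup_eq_left.2 hab, sup_idem] at h
      exact le_of_add_le_add_right h
    · intro x z
      have h1 := hJ x (x ⊓ z) z
      rw [sup_inf_self, sup_eq_right.2 inf_le_right] at h1
      -- h1 : f x + f z ≤ f (x ⊔ z) + f (x ⊓ z)
      have h2 := hMt x (x ⊔ z) z
      rw [inf_sup_self, (inf_eq_right.2 le_sup_right : (x ⊔ z) ⊓ z = z)] at h2
      -- h2 : f (x ⊓ z) + f (x ⊔ z) ≤ f x + f z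
      exact le_antisymm (by rwa [add_comm] at h2) h1
end
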